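/- Let R be a rooted binary tree-child network on X. Then every cherry-picking sequence associated with a complete cherry-reduction sequence for R is tree-child (i.e., satisfies properties (P1) and (P2)). -/

import Mathlib

/-!  Formalisation preliminaries for rooted and unrooted binary phylogenetic
networks, cherry reductions, cherry-reduction sequences and cherry-picking
sequences, following Döcker & Linz. -/

/-- A finite directed graph whose vertices are natural numbers. -/
structure DNet where
  verts : Finset ℕ
  arcs : Finset (ℕ × ℕ)

namespace DNet

/-- in-degree of a vertex -/
def inDeg (N : DNet) (v : ℕ) : ℕ := (N.arcs.filter (fun p => p.2 = v)).card

/-- out-degree of a vertex -/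
def outDeg (N : DNet) (v : ℕ) : ℕ := (N.arcs.filter (fun p => p.1 = v)).card

/-- the arc relation -/
def Arc (N : DNet) (u v : ℕ) : Prop := (u, v) ∈ N.arcs

/-- the digraph has no directed cycle -/
def Acyclic (N : DNet) : Prop := ∀ v, ¬ Relation.TransGen N.Arc v v

/-- root: in-degree 0 and out-degree 2 -/
def IsRoot (N : DNet) (v : ℕ) : Prop := v ∈ N.verts ∧ N.inDeg v = 0 ∧ N.outDeg v = 2

/-- leaf: in-degree 1 and out-degree 0 -/
def IsLeaf (N : DNet) (v : ℕ) : Prop := v ∈ N.verts ∧ N.inDeg v = 1 ∧ N.outDeg v = 0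

/-- tree vertex: in-degree 1 and out-degree 2 -/
def IsTreeVertex (N : DNet) (v : ℕ) : Prop := v ∈ N.verts ∧ N.inDeg v = 1 ∧ N.outDeg v = 2

/-- reticulation: in-degree 2 and out-degree 1 -/
def IsRet (N : DNet) (v : ℕ) : Prop := v ∈ N.verts ∧ N.inDeg v = 2 ∧ N.outDeg v = 1

/-- the network consists of a single vertex -/
def SingleVertex (N : DNet) : Prop := N.verts.card = 1 ∧ N.arcs = ∅

/-- the reticulation number of a rooted network: number of in-degree-2 vertices -/
def retNum (N : DNet) : ℕ := (N.verts.filter (fun v => N.inDeg v = 2)).card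

/-- tree-child: every vertex with a child has a child that is a tree vertex or a leaf -/
def TreeChild (N : DNet) : Prop :=
  ∀ v ∈ N.verts, N.outDeg v ≠ 0 → ∃ c, (v, c) ∈ N.arcs ∧ (N.IsTreeVertex c ∨ N.IsLeaf c)

/-- a stack: two reticulations joined by an arc -/
def HasStack (N : DNet) : Prop := ∃ u v, N.IsRet u ∧ N.IsRet v ∧ (u, v) ∈ N.arcs

/-- a pair of sibling reticulations: two reticulations with a common parent -/
def HasSiblingRets (N : DNet) : Prop :=
  ∃ p u v, u ≠ v ∧ N.IsRet u ∧ N.IsRet v ∧ (p, u) ∈ N.arcs ∧ (p, v) ∈ N.arcs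

/-- stack-free -/
def StackFree (N : DNet) : Prop := ¬ N.HasStack

end DNet

/-- `N` is a rooted binary phylogenetic network with leaf set `X`
(including the degenerate single-vertex network when `|X| = 1`). -/
def IsRootedBinaryNet (N : DNet) (X : Finset ℕ) : Prop :=
  (∃ x, X = {x} ∧ N.verts = {x} ∧ N.arcs = ∅) ∨
  ((∀ p ∈ N.arcs, p.1 ∈ N.verts ∧ p.2 ∈ N.verts) ∧
   (∀ p ∈ N.arcs, p.1 ≠ p.2) ∧
   N.Acyclic ∧
   (∃! ρ, ρ ∈ N.verts ∧ N.inDeg ρ = 0) ∧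
   (∀ v ∈ N.verts, N.IsRoot v ∨ N.IsLeaf v ∨ N.IsTreeVertex v ∨ N.IsRet v) ∧
   (∀ v, N.IsLeaf v ↔ v ∈ X))

/-- `[a,b]` is a cherry of the rooted network `N` (with `a` the leaf to be deleted). -/
def RCherry (N : DNet) (a b : ℕ) : Prop :=
  a ≠ b ∧ N.IsLeaf a ∧ N.IsLeaf b ∧ ∃ p, (p, a) ∈ N.arcs ∧ (p, b) ∈ N.arcs

/-- `(a,b)` is a reticulated cherry of the rooted network `N` with reticulation leaf `a`:
the parent of `a` is a reticulation and receives an arc from the parent of `b`. -/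
def RRetCherry (N : DNet) (a b : ℕ) : Prop :=
  a ≠ b ∧ N.IsLeaf a ∧ N.IsLeaf b ∧
  ∃ pa pb, (pa, a) ∈ N.arcs ∧ (pb, b) ∈ N.arcs ∧ N.IsRet pa ∧ (pb, pa) ∈ N.arcs

/-- `M` is obtained from the rooted network `N` by reducing the cherry `[a,b]`:
delete `a` and suppress (or, if it is the root, delete) the resulting degree-2 vertex. -/
def RReduceCherry (N M : DNet) (a b : ℕ) : Prop :=
  RCherry N a b ∧
  ∃ p, (p, a) ∈ N.arcs ∧ (p, b) ∈ N.arcs ∧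
    ((N.inDeg p = 0 ∧ M.verts = N.verts \ {a, p} ∧ M.arcs = N.arcs \ {(p, a), (p, b)}) ∨
     (∃ g, (g, p) ∈ N.arcs ∧ M.verts = N.verts \ {a, p} ∧
        M.arcs = insert (g, b) (N.arcs \ {(g, p), (p, a), (p, b)})))

/-- `M` is obtained from the rooted network `N` by reducing the reticulated cherry `(a,b)`
with reticulation leaf `a`: delete the reticulation arc `(p_b, p_a)` and suppress the two
resulting degree-2 vertices. -/
def RReduceRetCherry (N M : DNet) (a b : ℕ) : Prop :=
  RRetCherry N a b ∧
  ∃ pa pb qa qb, (pa, a) ∈ N.arcs ∧ (pb, b) ∈ N.arcs ∧ N.IsRet pa ∧ (pb, pa) ∈ N.arcs ∧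
    (qa, pa) ∈ N.arcs ∧ qa ≠ pb ∧ (qb, pb) ∈ N.arcs ∧
    M.verts = N.verts \ {pa, pb} ∧
    M.arcs = insert (qa, a) (insert (qb, b)
      (N.arcs \ {(pb, pa), (pa, a), (qa, pa), (pb, b), (qb, pb)}))

/-- A recorded reduction: either a cherry pair `[x,y]` or a reticulated-cherry pair `(x,y)`
(the deleted leaf, resp. the reticulation leaf, is listed first). -/
inductive Pick where
  | cherry (x y : ℕ)
  | ret (x y : ℕ)
deriving DecidableEq

namespace Pick

/-- first coordinate -/
def fst : Pick → ℕ
  | cherry x _ => x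
  | ret x _ => x

/-- second coordinate -/
def snd : Pick → ℕ
  | cherry _ y => y
  | ret _ y => y

/-- the pair contains the element `z` -/
def Contains (r : Pick) (z : ℕ) : Prop := r.fst = z ∨ r.snd = z

/-- the pair is a reticulated-cherry pair -/
def IsRetPair : Pick → Prop
  | cherry _ _ => False
  | ret _ _ => True

/-- the pair is a cherry pair -/
def IsCherryPair : Pick → Prop
  | cherry _ _ => True
  | ret _ _ => False

end Pick

/-- The step from `N` to `M` is the cherry reduction recorded by the pick `r`
(rooted version). -/
def RStep (N M : DNet) : Pick → Prop
  | .cherry x y => RReduceCherry N M x y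
  | .ret x y => RReduceRetCherry N M x y

/-- `(Ns 0, …, Ns k)` is a cherry-reduction sequence of rooted networks whose associated
cherry-picking sequence is `(rs 0, …, rs (k-1))`. -/
def RCherrySeq (Ns : ℕ → DNet) (rs : ℕ → Pick) (k : ℕ) : Prop :=
  ∀ i < k, RStep (Ns i) (Ns (i + 1)) (rs i)

/-- `(Ns 0, …, Ns k)` is a cherry-reduction sequence of rooted networks. -/
def RReductionSeq (Ns : ℕ → DNet) (k : ℕ) : Prop :=
  ∀ i < k, ∃ r, RStep (Ns i) (Ns (i + 1)) r

/-- `R` is a rooted orchard network: it admits a complete cherry-reduction sequence. -/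
def Orchard (R : DNet) : Prop :=
  ∃ Ns k, Ns 0 = R ∧ RReductionSeq Ns k ∧ (Ns k).SingleVertex

/-- `j = s(i)`: the smallest index `j > i` (within the sequence of length `k`) such that
`rs j` contains the first coordinate of `rs i`. -/
def SuccAt (rs : ℕ → Pick) (k i j : ℕ) : Prop :=
  i < j ∧ j < k ∧ (rs j).Contains (rs i).fst ∧
  ∀ l, i < l → l < j → ¬ (rs l).Contains (rs i).fst

/-- Property (P1): the successor pair of every reticulated-cherry pair, if it exists,
is a cherry pair. -/
def SeqP1 (rs : ℕ → Pick) (k : ℕ) : Prop :=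
  ∀ i j, (rs i).IsRetPair → SuccAt rs k i j → (rs j).IsCherryPair

/-- Property (P2): no element of the sequence is the successor pair of two distinct
reticulated-cherry pairs. -/
def SeqP2 (rs : ℕ → Pick) (k : ℕ) : Prop :=
  ∀ i i' j, i ≠ i' → (rs i).IsRetPair → (rs i').IsRetPair →
    SuccAt rs k i j → SuccAt rs k i' j → False

/-- A tree-child cherry-picking sequence: one satisfying (P1) and (P2). -/
def TreeChildSeq (rs : ℕ → Pick) (k : ℕ) : Prop := SeqP1 rs k ∧ SeqP2 rs k

/-- Property (P3): the first coordinate of each pair does not occur as the second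
coordinate of any later pair. -/
def SeqP3 (rs : ℕ → Pick) (k : ℕ) : Prop :=
  ∀ i j, i < j → j < k → (rs i).fst ≠ (rs j).snd

/-- A finite undirected graph whose vertices are natural numbers. -/
structure UNet where
  verts : Finset ℕ
  edges : Finset (Sym2 ℕ)

namespace UNet

/-- degree of a vertex -/
def deg (U : UNet) (v : ℕ) : ℕ := (U.edges.filter (fun e => v ∈ e)).card

/-- adjacency -/
def Adj (U : UNet) (u v : ℕ) : Prop := u ≠ v ∧ s(u, v) ∈ U.edges

/-- connectedness -/
def Connected (U : UNet) : Prop :=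
  ∀ u ∈ U.verts, ∀ v ∈ U.verts, Relation.ReflTransGen U.Adj u v

/-- leaf: degree-1 vertex -/
def IsLeaf (U : UNet) (v : ℕ) : Prop := v ∈ U.verts ∧ U.deg v = 1

/-- the network consists of a single vertex -/
def SingleVertex (U : UNet) : Prop := U.verts.card = 1 ∧ U.edges = ∅

/-- the reticulation number of an unrooted network: `|E| - (|V| - 1)` -/
def retNum (U : UNet) : ℕ := U.edges.card - (U.verts.card - 1)

end UNet

/-- `U` is an unrooted binary phylogenetic network with leaf set `X`
(including the degenerate single-vertex network when `|X| = 1`). -/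
def IsUnrootedBinaryNet (U : UNet) (X : Finset ℕ) : Prop :=
  (∃ x, X = {x} ∧ U.verts = {x} ∧ U.edges = ∅) ∨
  ((∀ e ∈ U.edges, ¬ e.IsDiag ∧ ∀ v ∈ e, v ∈ U.verts) ∧
   U.Connected ∧
   (∀ v ∈ U.verts, U.deg v = 1 ∨ U.deg v = 3) ∧
   (∀ v, U.IsLeaf v ↔ v ∈ X))

/-- `[a,b]` is a cherry of the unrooted network `U`. -/
def UCherry (U : UNet) (a b : ℕ) : Prop :=
  a ≠ b ∧ U.IsLeaf a ∧ U.IsLeaf b ∧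
  ((∃ p, s(a, p) ∈ U.edges ∧ s(b, p) ∈ U.edges ∧ p ≠ a ∧ p ≠ b) ∨ U.edges = {s(a, b)})

/-- the edge `{u,v}` lies on a cycle of `U` -/
def UOnCycle (U : UNet) (u v : ℕ) : Prop :=
  s(u, v) ∈ U.edges ∧
  Relation.ReflTransGen (fun x y => x ≠ y ∧ s(x, y) ∈ U.edges ∧ s(x, y) ≠ s(u, v)) u v

/-- `(a,b)` is a reticulated cherry of the unrooted network `U` with reticulation
edge `{u,v}`. -/
def URetCherry (U : UNet) (a b : ℕ) : Prop :=
  a ≠ b ∧ U.IsLeaf a ∧ U.IsLeaf b ∧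
  ∃ u v, s(a, u) ∈ U.edges ∧ s(u, v) ∈ U.edges ∧ s(v, b) ∈ U.edges ∧
    u ≠ v ∧ u ≠ a ∧ v ≠ b ∧ UOnCycle U u v

/-- `W` is obtained from `U` by reducing the cherry `[a,b]`: delete `a` and, if `U` has
at least two edges, suppress the resulting degree-2 vertex. -/
def UReduceCherry (U W : UNet) (a b : ℕ) : Prop :=
  UCherry U a b ∧
  ((U.edges = {s(a, b)} ∧ W.verts = U.verts \ {a} ∧ W.edges = ∅) ∨
   (∃ p g, s(a, p) ∈ U.edges ∧ s(b, p) ∈ U.edges ∧ s(p, g) ∈ U.edges ∧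
      p ≠ a ∧ p ≠ b ∧ g ≠ a ∧ g ≠ b ∧ g ≠ p ∧
      W.verts = U.verts \ {a, p} ∧
      W.edges = insert s(b, g) (U.edges \ {s(a, p), s(b, p), s(p, g)})))

/-- `W` is obtained from `U` by reducing the reticulated cherry `(a,b)`: delete the
reticulation edge `{u,v}` and suppress the two resulting degree-2 vertices. -/
def UReduceRetCherry (U W : UNet) (a b : ℕ) : Prop :=
  URetCherry U a b ∧
  ∃ u v ga gb, s(a, u) ∈ U.edges ∧ s(u, v) ∈ U.edges ∧ s(v, b) ∈ U.edges ∧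
    u ≠ v ∧ u ≠ a ∧ v ≠ b ∧ UOnCycle U u v ∧
    s(u, ga) ∈ U.edges ∧ ga ≠ a ∧ ga ≠ v ∧ ga ≠ u ∧
    s(v, gb) ∈ U.edges ∧ gb ≠ b ∧ gb ≠ u ∧ gb ≠ v ∧
    W.verts = U.verts \ {u, v} ∧
    W.edges = insert s(a, ga) (insert s(b, gb)
      (U.edges \ {s(u, v), s(a, u), s(u, ga), s(v, b), s(v, gb)}))

/-- The step from `U` to `W` is the cherry reduction recorded by the pick `r`
(unrooted version). -/
def UStep (U W : UNet) : Pick → Prop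
  | .cherry x y => UReduceCherry U W x y
  | .ret x y => UReduceRetCherry U W x y

/-- `(Us 0, …, Us k)` is a cherry-reduction sequence of unrooted networks whose associated
cherry-picking sequence is `(rs 0, …, rs (k-1))`. -/
def UCherrySeq (Us : ℕ → UNet) (rs : ℕ → Pick) (k : ℕ) : Prop :=
  ∀ i < k, UStep (Us i) (Us (i + 1)) (rs i)

/-- `(Us 0, …, Us k)` is a cherry-reduction sequence of unrooted networks. -/
def UReductionSeq (Us : ℕ → UNet) (k : ℕ) : Prop :=
  ∀ i < k, ∃ r, UStep (Us i) (Us (i + 1)) r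

/-- The rooted network `R` is an orientation of the unrooted network `U`: `U` is obtained
from `R` by forgetting arc directions and suppressing the root. -/
def IsOrientationOf (R : DNet) (U : UNet) : Prop :=
  (R.arcs = ∅ ∧ U.edges = ∅ ∧ U.verts = R.verts) ∨
  (∃ ρ c₁ c₂, ρ ∈ R.verts ∧ R.inDeg ρ = 0 ∧ c₁ ≠ c₂ ∧
    (ρ, c₁) ∈ R.arcs ∧ (ρ, c₂) ∈ R.arcs ∧
    U.verts = R.verts.erase ρ ∧
    U.edges = insert s(c₁, c₂)
      ((R.arcs.filter (fun p => p.1 ≠ ρ)).image (fun p => s(p.1, p.2))))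

/-- `U` is an unrooted tree-child network on `X`: it has a tree-child orientation. -/
def UnrootedTreeChild (U : UNet) (X : Finset ℕ) : Prop :=
  ∃ R : DNet, IsRootedBinaryNet R X ∧ R.TreeChild ∧ IsOrientationOf R U

/-- The pick `r` is one of the picks associated with the recorded reduction `p`:
it must agree with `p` on cherry reductions, and may swap the two coordinates of a
reticulated-cherry reduction. -/
def PickAssoc : Pick → Pick → Prop
  | .cherry x y, r => r = .cherry x y
  | .ret x y, r => r = .ret x y ∨ r = .ret y x

/-- `X`-labelled isomorphism of unrooted networks. -/
def UIso (X : Finset ℕ) (U W : UNet) : Prop :=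
  ∃ f : ℕ → ℕ, Set.BijOn f ↑U.verts ↑W.verts ∧ (∀ x ∈ X, f x = x) ∧
    W.edges = U.edges.image (Sym2.map f)

/-! ### Auxiliary development for Lemma 2 -/

namespace CPS

open DNet

/-- tree-or-leaf -/
def TOL (N : DNet) (c : ℕ) : Prop := N.IsTreeVertex c ∨ N.IsLeaf c

lemma TOL.inDeg_one {N : DNet} {c : ℕ} (h : TOL N c) : N.inDeg c = 1 := by
  rcases h with h | h
  · exact h.2.1
  · exact h.2.1

lemma outDeg_ne_zero {N : DNet} {u v : ℕ} (h : (u, v) ∈ N.arcs) : N.outDeg u ≠ 0 := by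
  have : (u, v) ∈ N.arcs.filter (fun p => p.1 = u) := Finset.mem_filter.2 ⟨h, rfl⟩
  exact Finset.card_ne_zero_of_mem this

lemma inDeg_ne_zero {N : DNet} {u v : ℕ} (h : (u, v) ∈ N.arcs) : N.inDeg v ≠ 0 := by
  have : (u, v) ∈ N.arcs.filter (fun p => p.2 = v) := Finset.mem_filter.2 ⟨h, rfl⟩
  exact Finset.card_ne_zero_of_mem this

lemma parent_unique {N : DNet} {v p q : ℕ} (h1 : N.inDeg v = 1)
    (hp : (p, v) ∈ N.arcs) (hq : (q, v) ∈ N.arcs) : p = q := by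
  have hle : (N.arcs.filter (fun p => p.2 = v)).card ≤ 1 := le_of_eq h1
  have := Finset.card_le_one.mp hle (p, v) (Finset.mem_filter.2 ⟨hp, rfl⟩)
    (q, v) (Finset.mem_filter.2 ⟨hq, rfl⟩)
  exact congrArg Prod.fst this

lemma child_unique {N : DNet} {v p q : ℕ} (h1 : N.outDeg v = 1)
    (hp : (v, p) ∈ N.arcs) (hq : (v, q) ∈ N.arcs) : p = q := by
  have hle : (N.arcs.filter (fun p => p.1 = v)).card ≤ 1 := le_of_eq h1
  have := Finset.card_le_one.mp hle (v, p) (Finset.mem_filter.2 ⟨hp, rfl⟩)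
    (v, q) (Finset.mem_filter.2 ⟨hq, rfl⟩)
  exact congrArg Prod.snd this

lemma children_pair {N : DNet} {u a b c : ℕ} (h2 : N.outDeg u = 2)
    (ha : (u, a) ∈ N.arcs) (hb : (u, b) ∈ N.arcs) (hab : a ≠ b)
    (hc : (u, c) ∈ N.arcs) : c = a ∨ c = b := by
  have hsub : ({(u, a), (u, b)} : Finset (ℕ × ℕ)) ⊆ N.arcs.filter (fun p => p.1 = u) := by
    intro e he
    rcases Finset.mem_insert.mp he with rfl | he
    · exact Finset.mem_filter.2 ⟨ha, rfl⟩
    · rcases Finset.mem_singleton.mp he with rfl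
      exact Finset.mem_filter.2 ⟨hb, rfl⟩
  have hcard : ({(u, a), (u, b)} : Finset (ℕ × ℕ)).card = 2 := by
    rw [Finset.card_insert_of_notMem (by simp [hab]), Finset.card_singleton]
  have heq := Finset.eq_of_subset_of_card_le hsub (by rw [hcard]; exact le_of_eq h2)
  have : (u, c) ∈ ({(u, a), (u, b)} : Finset (ℕ × ℕ)) := by
    rw [heq]; exact Finset.mem_filter.2 ⟨hc, rfl⟩
  simpa using this

lemma parents_pair {N : DNet} {u a b c : ℕ} (h2 : N.inDeg u = 2)
    (ha : (a, u) ∈ N.arcs) (hb : (b, u) ∈ N.arcs) (hab : a ≠ b)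
    (hc : (c, u) ∈ N.arcs) : c = a ∨ c = b := by
  have hsub : ({(a, u), (b, u)} : Finset (ℕ × ℕ)) ⊆ N.arcs.filter (fun p => p.2 = u) := by
    intro e he
    rcases Finset.mem_insert.mp he with rfl | he
    · exact Finset.mem_filter.2 ⟨ha, rfl⟩
    · rcases Finset.mem_singleton.mp he with rfl
      exact Finset.mem_filter.2 ⟨hb, rfl⟩
  have hcard : ({(a, u), (b, u)} : Finset (ℕ × ℕ)).card = 2 := by
    rw [Finset.card_insert_of_notMem (by simp [hab]), Finset.card_singleton]
  have heq := Finset.eq_of_subset_of_card_le hsub (by rw [hcard]; exact le_of_eq h2)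
  have : (c, u) ∈ ({(a, u), (b, u)} : Finset (ℕ × ℕ)) := by
    rw [heq]; exact Finset.mem_filter.2 ⟨hc, rfl⟩
  simpa using this

lemma acyclic_of_sub {N M : DNet} (h : ∀ u v, M.Arc u v → Relation.TransGen N.Arc u v)
    (hacy : N.Acyclic) : M.Acyclic := by
  intro v hv
  have : Relation.TransGen (Relation.TransGen N.Arc) v v := Relation.TransGen.mono h v v hv
  rw [Relation.transGen_idem] at this
  exact hacy v this

/-- the invariant maintained for a reticulation leaf `x` with stable parent `q` -/
def Inv (N : DNet) (x q : ℕ) : Prop :=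
  (q, x) ∈ N.arcs ∧ N.outDeg x = 0 ∧ N.inDeg x = 1 ∧ N.inDeg q ≠ 2 ∧
  ∀ c, (q, c) ∈ N.arcs → c ≠ x → N.inDeg c ≠ 2

/-- the structural invariant of networks in the reduction sequence -/
def Good (N : DNet) : Prop :=
  (∀ p ∈ N.arcs, p.1 ∈ N.verts ∧ p.2 ∈ N.verts) ∧
  (∀ p ∈ N.arcs, p.1 ≠ p.2) ∧ N.Acyclic ∧
  (∃! ρ, ρ ∈ N.verts ∧ N.inDeg ρ = 0) ∧
  (∀ v ∈ N.verts, N.IsRoot v ∨ N.IsLeaf v ∨ N.IsTreeVertex v ∨ N.IsRet v) ∧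
  N.TreeChild

lemma no_infinite_ancestor (N : DNet) (hacy : N.Acyclic) (P : ℕ → Prop)
    (hvert : ∀ z, P z → z ∈ N.verts)
    (hstep : ∀ z, P z → ∃ w, P w ∧ (w, z) ∈ N.arcs) : ∀ z, ¬ P z := by
  intro z hz
  let f : ℕ → {z // P z} := fun n => Nat.rec ⟨z, hz⟩
    (fun _ prev => ⟨(hstep _ prev.2).choose, (hstep _ prev.2).choose_spec.1⟩) n
  have harc : ∀ n, ((f (n + 1)).1, (f n).1) ∈ N.arcs := fun n =>
    (hstep _ (f n).2).choose_spec.2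
  have htrans : ∀ m n, m < n → Relation.TransGen N.Arc (f n).1 (f m).1 := by
    intro m n h
    induction n with
    | zero => omega
    | succ n ih =>
      rcases Nat.lt_succ_iff_lt_or_eq.mp h with h' | rfl
      · exact (ih h').head (harc n)
      · exact Relation.TransGen.single (harc m)
  have : ∃ m n, m ≠ n ∧ (fun n => (⟨(f n).1, hvert _ (f n).2⟩ : ↥N.verts)) m =
      (fun n => (⟨(f n).1, hvert _ (f n).2⟩ : ↥N.verts)) n :=
    Finite.exists_ne_map_eq_of_infinite _
  obtain ⟨m, n, hmn, heq⟩ := this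
  have heq' : (f m).1 = (f n).1 := by simpa using congrArg Subtype.val heq
  rcases Nat.lt_or_ge m n with h | h
  · have := htrans m n h; rw [heq'] at this; exact hacy _ this
  · have := htrans n m (lt_of_le_of_ne h (Ne.symm hmn)); rw [← heq'] at this
    exact hacy _ this

end CPS
namespace CPS

/-- cardinality helpers -/
lemma no_swap_card {α : Type} [DecidableEq α] {s t : Finset α}
    (ht : ∀ x, x ∈ t ↔ x ∈ s) : t.card = s.card := by
  congr 1; ext x; exact ht x

lemma one_swap_card {α : Type} [DecidableEq α] {s t : Finset α} {d i : α}
    (hd : d ∈ s) (hi : i ∉ s)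
    (ht : ∀ x, x ∈ t ↔ x = i ∨ (x ∈ s ∧ x ≠ d)) : t.card = s.card := by
  have h1 : t = insert i (s.erase d) := by
    ext x; rw [ht x, Finset.mem_insert, Finset.mem_erase]; tauto
  have h2 : i ∉ s.erase d := fun h => hi (Finset.mem_of_mem_erase h)
  have h3 : 1 ≤ s.card := Finset.card_pos.2 ⟨d, hd⟩
  rw [h1, Finset.card_insert_of_notMem h2, Finset.card_erase_of_mem hd]
  omega

lemma two_swap_card {α : Type} [DecidableEq α] {s t : Finset α} {d1 d2 i1 i2 : α}
    (hd1 : d1 ∈ s) (hd2 : d2 ∈ s) (hd : d1 ≠ d2)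
    (hi1 : i1 ∉ s) (hi2 : i2 ∉ s) (hi : i1 ≠ i2)
    (ht : ∀ x, x ∈ t ↔ x = i1 ∨ x = i2 ∨ (x ∈ s ∧ x ≠ d1 ∧ x ≠ d2)) :
    t.card = s.card := by
  have h1 : t = insert i1 (insert i2 ((s.erase d1).erase d2)) := by
    ext x
    rw [ht x, Finset.mem_insert, Finset.mem_insert, Finset.mem_erase, Finset.mem_erase]
    tauto
  have h2 : i2 ∉ (s.erase d1).erase d2 := by
    intro h; exact hi2 (Finset.mem_of_mem_erase (Finset.mem_of_mem_erase h))
  have h3 : i1 ∉ insert i2 ((s.erase d1).erase d2) := by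
    intro h
    rcases Finset.mem_insert.mp h with h | h
    · exact hi h
    · exact hi1 (Finset.mem_of_mem_erase (Finset.mem_of_mem_erase h))
  have h4 : d2 ∈ s.erase d1 := Finset.mem_erase.2 ⟨Ne.symm hd, hd2⟩
  have h5 : 2 ≤ s.card := by
    have : ({d1, d2} : Finset α) ⊆ s := by
      intro x hx
      rcases Finset.mem_insert.mp hx with rfl | hx
      · exact hd1
      · rw [Finset.mem_singleton.mp hx]; exact hd2
    have := Finset.card_le_card this
    rwa [Finset.card_insert_of_notMem (by simp [hd]), Finset.card_singleton] at this
  rw [h1, Finset.card_insert_of_notMem h3, Finset.card_insert_of_notMem h2,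
    Finset.card_erase_of_mem h4, Finset.card_erase_of_mem hd1]
  omega

/-- All hypotheses available when a reticulated cherry `(a,b)` is reduced. -/
structure RetData (N M : DNet) (a b pa pb qa qb : ℕ) : Prop where
  hend : ∀ p ∈ N.arcs, p.1 ∈ N.verts ∧ p.2 ∈ N.verts
  hnl : ∀ p ∈ N.arcs, p.1 ≠ p.2
  hacy : N.Acyclic
  hrt : ∃! ρ, ρ ∈ N.verts ∧ N.inDeg ρ = 0
  hcl : ∀ v ∈ N.verts, N.IsRoot v ∨ N.IsLeaf v ∨ N.IsTreeVertex v ∨ N.IsRet v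
  htc : N.TreeChild
  hab : a ≠ b
  hla : N.IsLeaf a
  hlb : N.IsLeaf b
  hpaa : (pa, a) ∈ N.arcs
  hpbb : (pb, b) ∈ N.arcs
  hretpa : N.IsRet pa
  hpbpa : (pb, pa) ∈ N.arcs
  hqapa : (qa, pa) ∈ N.arcs
  hqanepb : qa ≠ pb
  hqbpb : (qb, pb) ∈ N.arcs
  hMv : M.verts = N.verts \ {pa, pb}
  hMa : M.arcs = insert (qa, a) (insert (qb, b)
      (N.arcs \ {(pb, pa), (pa, a), (qa, pa), (pb, b), (qb, pb)}))

namespace RetData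

variable {N M : DNet} {a b pa pb qa qb : ℕ} (D : RetData N M a b pa pb qa qb)
include D

lemma anepa : a ≠ pa := by
  intro h; have h1 := D.hla.2.2; have h2 := D.hretpa.2.2; rw [h] at h1; omega

lemma anepb : a ≠ pb := by
  intro h; have h1 := D.hla.2.2; rw [h] at h1; exact outDeg_ne_zero D.hpbb h1

lemma bnepa : b ≠ pa := by
  intro h; have h1 := D.hlb.2.2; have h2 := D.hretpa.2.2; rw [h] at h1; omega

lemma bnepb : b ≠ pb := by
  intro h; have h1 := D.hlb.2.2; rw [h] at h1; exact outDeg_ne_zero D.hpbb h1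

lemma qanepa : qa ≠ pa := D.hnl _ D.hqapa
lemma qbnepb : qb ≠ pb := D.hnl _ D.hqbpb
lemma pbnepa : pb ≠ pa := D.hnl _ D.hpbpa

lemma qanea : qa ≠ a := by
  intro h; have h1 := D.hla.2.2; rw [← h] at h1; exact outDeg_ne_zero D.hqapa h1

lemma qaneb : qa ≠ b := by
  intro h; have h1 := D.hlb.2.2; rw [← h] at h1; exact outDeg_ne_zero D.hqapa h1

lemma qbnea : qb ≠ a := by
  intro h; have h1 := D.hla.2.2; rw [← h] at h1; exact outDeg_ne_zero D.hqbpb h1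

lemma qbneb : qb ≠ b := by
  intro h; have h1 := D.hlb.2.2; rw [← h] at h1; exact outDeg_ne_zero D.hqbpb h1

lemma pachild : ∀ c, (pa, c) ∈ N.arcs → c = a :=
  fun _ hc => child_unique D.hretpa.2.2 hc D.hpaa

lemma qbnepa : qb ≠ pa := by
  intro h
  have := D.pachild pb (h ▸ D.hqbpb)
  exact D.anepb (this.symm)

lemma aparent : ∀ w, (w, a) ∈ N.arcs → w = pa :=
  fun _ hw => parent_unique D.hla.2.1 hw D.hpaa

lemma bparent : ∀ w, (w, b) ∈ N.arcs → w = pb :=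
  fun _ hw => parent_unique D.hlb.2.1 hw D.hpbb

lemma paparent : ∀ w, (w, pa) ∈ N.arcs → w = pb ∨ w = qa :=
  fun _ hw => parents_pair D.hretpa.2.1 D.hpbpa D.hqapa (Ne.symm D.hqanepb) hw

lemma pbverts : pb ∈ N.verts := (D.hend _ D.hpbb).1

lemma pbtree : N.inDeg pb = 1 ∧ N.outDeg pb = 2 := by
  rcases D.hcl pb D.pbverts with h | h | h | h
  · exact absurd h.2.1 (inDeg_ne_zero D.hqbpb)
  · exact absurd h.2.2 (outDeg_ne_zero D.hpbb)
  · exact ⟨h.2.1, h.2.2⟩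
  · exact absurd (child_unique h.2.2 D.hpbb D.hpbpa) D.bnepa

lemma pbparent : ∀ w, (w, pb) ∈ N.arcs → w = qb :=
  fun _ hw => parent_unique D.pbtree.1 hw D.hqbpb

lemma pbchild : ∀ c, (pb, c) ∈ N.arcs → c = b ∨ c = pa :=
  fun _ hc => children_pair D.pbtree.2 D.hpbb D.hpbpa D.bnepa hc

lemma qaa_nmem : (qa, a) ∉ N.arcs := fun h => D.qanepa (D.aparent _ h)
lemma qbb_nmem : (qb, b) ∉ N.arcs := fun h => D.qbnepb (D.bparent _ h)

lemma qaverts : qa ∈ N.verts := (D.hend _ D.hqapa).1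
lemma qbverts : qb ∈ N.verts := (D.hend _ D.hqbpb).1
lemma paverts : pa ∈ N.verts := (D.hend _ D.hpaa).1
lemma averts : a ∈ N.verts := (D.hend _ D.hpaa).2
lemma bverts : b ∈ N.verts := (D.hend _ D.hpbb).2

lemma qatype : N.outDeg qa = 2 ∧ N.inDeg qa ≠ 2 := by
  rcases D.hcl qa D.qaverts with h | h | h | h
  · exact ⟨h.2.2, by rw [h.2.1]; omega⟩
  · exact absurd h.2.2 (outDeg_ne_zero D.hqapa)
  · exact ⟨h.2.2, by rw [h.2.1]; omega⟩
  · exfalso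
    obtain ⟨c, hc, hTOL⟩ := D.htc qa D.qaverts (by rw [h.2.2]; omega)
    have hcpa : c = pa := child_unique h.2.2 hc D.hqapa
    have : N.inDeg c = 1 := TOL.inDeg_one hTOL
    rw [hcpa, D.hretpa.2.1] at this
    omega

lemma memM : ∀ u v : ℕ, ((u, v) ∈ M.arcs ↔ (u = qa ∧ v = a) ∨ (u = qb ∧ v = b) ∨
    ((u, v) ∈ N.arcs ∧ ¬(u = pb ∧ v = pa) ∧ ¬(u = pa ∧ v = a) ∧ ¬(u = qa ∧ v = pa) ∧
      ¬(u = pb ∧ v = b) ∧ ¬(u = qb ∧ v = pb))) := by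
  intro u v
  rw [D.hMa]
  simp only [Finset.mem_insert, Finset.mem_sdiff, Finset.mem_singleton, Prod.mk.injEq,
    not_or]

end RetData

end CPS
namespace CPS
namespace RetData

variable {N M : DNet} {a b pa pb qa qb : ℕ} (D : RetData N M a b pa pb qa qb)
include D

lemma qab_nmem : (qa, b) ∉ N.arcs := fun h => D.hqanepb (D.bparent _ h)

lemma indeg_eq (v : ℕ) (h1 : v ≠ pa) (h2 : v ≠ pb) : M.inDeg v = N.inDeg v := by
  unfold DNet.inDeg
  by_cases hva : v = a
  · subst hva
    refine one_swap_card (d := (pa, v)) (i := (qa, v))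
      (Finset.mem_filter.2 ⟨D.hpaa, rfl⟩)
      (fun h => D.qaa_nmem (Finset.mem_filter.1 h).1) ?_
    rintro ⟨u, w⟩
    simp only [Finset.mem_filter, Prod.mk.injEq, ne_eq]
    rw [D.memM u w]
    constructor
    · rintro ⟨hm, rfl⟩
      rcases hm with ⟨rfl, -⟩ | ⟨rfl, hb'⟩ | ⟨hn, hd1, hd2, hd3, hd4, hd5⟩
      · exact Or.inl ⟨rfl, rfl⟩
      · exact absurd hb' D.hab
      · exact Or.inr ⟨⟨hn, rfl⟩, fun hx => hd2 ⟨hx.1, hx.2⟩⟩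
    · rintro (⟨rfl, rfl⟩ | ⟨⟨hn, rfl⟩, hne⟩)
      · exact ⟨Or.inl ⟨rfl, rfl⟩, rfl⟩
      · refine ⟨Or.inr (Or.inr ⟨hn, ?_, ?_, ?_, ?_, ?_⟩), rfl⟩
        · rintro ⟨-, h⟩; exact D.anepa h
        · rintro ⟨rfl, -⟩; exact hne ⟨rfl, rfl⟩
        · rintro ⟨-, h⟩; exact D.anepa h
        · rintro ⟨-, h⟩; exact D.hab h
        · rintro ⟨-, h⟩; exact D.anepb h
  · by_cases hvb : v = b
    · subst hvb
      refine one_swap_card (d := (pb, v)) (i := (qb, v))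
        (Finset.mem_filter.2 ⟨D.hpbb, rfl⟩)
        (fun h => D.qbb_nmem (Finset.mem_filter.1 h).1) ?_
      rintro ⟨u, w⟩
      simp only [Finset.mem_filter, Prod.mk.injEq, ne_eq]
      rw [D.memM u w]
      constructor
      · rintro ⟨hm, rfl⟩
        rcases hm with ⟨rfl, ha'⟩ | ⟨rfl, -⟩ | ⟨hn, hd1, hd2, hd3, hd4, hd5⟩
        · exact absurd ha'.symm D.hab
        · exact Or.inl ⟨rfl, rfl⟩
        · exact Or.inr ⟨⟨hn, rfl⟩, fun hx => hd4 ⟨hx.1, hx.2⟩⟩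
      · rintro (⟨rfl, rfl⟩ | ⟨⟨hn, rfl⟩, hne⟩)
        · exact ⟨Or.inr (Or.inl ⟨rfl, rfl⟩), rfl⟩
        · refine ⟨Or.inr (Or.inr ⟨hn, ?_, ?_, ?_, ?_, ?_⟩), rfl⟩
          · rintro ⟨-, h⟩; exact D.bnepa h
          · rintro ⟨-, h⟩; exact D.hab h.symm
          · rintro ⟨-, h⟩; exact D.bnepa h
          · rintro ⟨rfl, -⟩; exact hne ⟨rfl, rfl⟩
          · rintro ⟨-, h⟩; exact D.bnepb h
    · refine no_swap_card ?_
      rintro ⟨u, w⟩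
      simp only [Finset.mem_filter, Prod.mk.injEq]
      rw [D.memM u w]
      constructor
      · rintro ⟨hm, rfl⟩
        rcases hm with ⟨rfl, h⟩ | ⟨rfl, h⟩ | ⟨hn, -⟩
        · exact absurd h hva
        · exact absurd h hvb
        · exact ⟨hn, rfl⟩
      · rintro ⟨hn, rfl⟩
        refine ⟨Or.inr (Or.inr ⟨hn, ?_, ?_, ?_, ?_, ?_⟩), rfl⟩
        · rintro ⟨-, h⟩; exact h1 h
        · rintro ⟨-, h⟩; exact hva h
        · rintro ⟨-, h⟩; exact h1 h
        · rintro ⟨-, h⟩; exact hvb h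
        · rintro ⟨-, h⟩; exact h2 h

lemma outdeg_eq (v : ℕ) (h1 : v ≠ pa) (h2 : v ≠ pb) : M.outDeg v = N.outDeg v := by
  unfold DNet.outDeg
  by_cases hvqa : v = qa
  · subst hvqa
    by_cases hqq : v = qb
    · subst hqq
      refine two_swap_card (d1 := (v, pa)) (d2 := (v, pb)) (i1 := (v, a)) (i2 := (v, b))
        (Finset.mem_filter.2 ⟨D.hqapa, rfl⟩)
        (Finset.mem_filter.2 ⟨D.hqbpb, rfl⟩)
        (by simp [Ne.symm D.pbnepa])
        (fun h => D.qaa_nmem (Finset.mem_filter.1 h).1)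
        (fun h => D.qbb_nmem (Finset.mem_filter.1 h).1)
        (by simp [D.hab]) ?_
      rintro ⟨u, w⟩
      simp only [Finset.mem_filter, Prod.mk.injEq, ne_eq]
      rw [D.memM u w]
      constructor
      · rintro ⟨hm, rfl⟩
        rcases hm with ⟨-, rfl⟩ | ⟨-, rfl⟩ | ⟨hn, hd1, hd2, hd3, hd4, hd5⟩
        · exact Or.inl ⟨rfl, rfl⟩
        · exact Or.inr (Or.inl ⟨rfl, rfl⟩)
        · refine Or.inr (Or.inr ⟨⟨hn, rfl⟩, ?_, ?_⟩)
          · rintro ⟨-, rfl⟩; exact hd3 ⟨rfl, rfl⟩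
          · rintro ⟨-, rfl⟩; exact hd5 ⟨rfl, rfl⟩
      · rintro (⟨rfl, rfl⟩ | ⟨rfl, rfl⟩ | ⟨⟨hn, rfl⟩, hne1, hne2⟩)
        · exact ⟨Or.inl ⟨rfl, rfl⟩, rfl⟩
        · exact ⟨Or.inr (Or.inl ⟨rfl, rfl⟩), rfl⟩
        · refine ⟨Or.inr (Or.inr ⟨hn, ?_, ?_, ?_, ?_, ?_⟩), rfl⟩
          · rintro ⟨h, -⟩; exact D.hqanepb h
          · rintro ⟨h, -⟩; exact D.qanepa h
          · rintro ⟨-, h⟩; exact hne1 ⟨rfl, h⟩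
          · rintro ⟨h, -⟩; exact D.hqanepb h
          · rintro ⟨-, h⟩; exact hne2 ⟨rfl, h⟩
    · refine one_swap_card (d := (v, pa)) (i := (v, a))
        (Finset.mem_filter.2 ⟨D.hqapa, rfl⟩)
        (fun h => D.qaa_nmem (Finset.mem_filter.1 h).1) ?_
      rintro ⟨u, w⟩
      simp only [Finset.mem_filter, Prod.mk.injEq, ne_eq]
      rw [D.memM u w]
      constructor
      · rintro ⟨hm, rfl⟩
        rcases hm with ⟨-, rfl⟩ | ⟨h, -⟩ | ⟨hn, hd1, hd2, hd3, hd4, hd5⟩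
        · exact Or.inl ⟨rfl, rfl⟩
        · exact absurd h hqq
        · refine Or.inr ⟨⟨hn, rfl⟩, ?_⟩
          rintro ⟨-, rfl⟩; exact hd3 ⟨rfl, rfl⟩
      · rintro (⟨rfl, rfl⟩ | ⟨⟨hn, rfl⟩, hne⟩)
        · exact ⟨Or.inl ⟨rfl, rfl⟩, rfl⟩
        · refine ⟨Or.inr (Or.inr ⟨hn, ?_, ?_, ?_, ?_, ?_⟩), rfl⟩
          · rintro ⟨h, -⟩; exact D.hqanepb h
          · rintro ⟨h, -⟩; exact D.qanepa h
          · rintro ⟨-, h⟩; exact hne ⟨rfl, h⟩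
          · rintro ⟨h, -⟩; exact D.hqanepb h
          · rintro ⟨h, -⟩; exact hqq h
  · by_cases hvqb : v = qb
    · subst hvqb
      refine one_swap_card (d := (v, pb)) (i := (v, b))
        (Finset.mem_filter.2 ⟨D.hqbpb, rfl⟩)
        (fun h => D.qbb_nmem (Finset.mem_filter.1 h).1) ?_
      rintro ⟨u, w⟩
      simp only [Finset.mem_filter, Prod.mk.injEq, ne_eq]
      rw [D.memM u w]
      constructor
      · rintro ⟨hm, rfl⟩
        rcases hm with ⟨h, -⟩ | ⟨-, rfl⟩ | ⟨hn, hd1, hd2, hd3, hd4, hd5⟩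
        · exact absurd h hvqa
        · exact Or.inl ⟨rfl, rfl⟩
        · refine Or.inr ⟨⟨hn, rfl⟩, ?_⟩
          rintro ⟨-, rfl⟩; exact hd5 ⟨rfl, rfl⟩
      · rintro (⟨rfl, rfl⟩ | ⟨⟨hn, rfl⟩, hne⟩)
        · exact ⟨Or.inr (Or.inl ⟨rfl, rfl⟩), rfl⟩
        · refine ⟨Or.inr (Or.inr ⟨hn, ?_, ?_, ?_, ?_, ?_⟩), rfl⟩
          · rintro ⟨h, -⟩; exact h2 h
          · rintro ⟨h, -⟩; exact h1 h
          · rintro ⟨h, -⟩; exact hvqa h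
          · rintro ⟨h, -⟩; exact h2 h
          · rintro ⟨-, h⟩; exact hne ⟨rfl, h⟩
    · refine no_swap_card ?_
      rintro ⟨u, w⟩
      simp only [Finset.mem_filter, Prod.mk.injEq]
      rw [D.memM u w]
      constructor
      · rintro ⟨hm, rfl⟩
        rcases hm with ⟨h, -⟩ | ⟨h, -⟩ | ⟨hn, -⟩
        · exact absurd h hvqa
        · exact absurd h hvqb
        · exact ⟨hn, rfl⟩
      · rintro ⟨hn, rfl⟩
        refine ⟨Or.inr (Or.inr ⟨hn, ?_, ?_, ?_, ?_, ?_⟩), rfl⟩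
        · rintro ⟨h, -⟩; exact h2 h
        · rintro ⟨h, -⟩; exact h1 h
        · rintro ⟨h, -⟩; exact hvqa h
        · rintro ⟨h, -⟩; exact h2 h
        · rintro ⟨h, -⟩; exact hvqb h

end RetData
end CPS
namespace CPS
namespace RetData

variable {N M : DNet} {a b pa pb qa qb : ℕ} (D : RetData N M a b pa pb qa qb)
include D

lemma memMverts (v : ℕ) : v ∈ M.verts ↔ v ∈ N.verts ∧ v ≠ pa ∧ v ≠ pb := by
  rw [D.hMv]; simp [not_or]

lemma ret_good : Good M := by
  obtain ⟨ρ, ⟨hρv, hρ0⟩, huniq⟩ := D.hrt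
  have hρnepa : ρ ≠ pa := by
    intro h; rw [h, D.hretpa.2.1] at hρ0; omega
  have hρnepb : ρ ≠ pb := by
    intro h; rw [h, D.pbtree.1] at hρ0; omega
  refine ⟨?_, ?_, ?_, ?_, ?_, ?_⟩
  · -- endpoints
    rintro ⟨u, v⟩ hm
    rw [D.memM u v] at hm
    simp only [D.memMverts]
    rcases hm with ⟨rfl, rfl⟩ | ⟨rfl, rfl⟩ | ⟨hn, d1, d2, d3, d4, d5⟩
    · exact ⟨⟨D.qaverts, D.qanepa, D.hqanepb⟩, D.averts, D.anepa, D.anepb⟩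
    · exact ⟨⟨D.qbverts, D.qbnepa, D.qbnepb⟩, D.bverts, D.bnepa, D.bnepb⟩
    · refine ⟨⟨(D.hend _ hn).1, ?_, ?_⟩, (D.hend _ hn).2, ?_, ?_⟩
      · rintro rfl; exact d2 ⟨rfl, D.pachild v hn⟩
      · rintro rfl
        rcases D.pbchild v hn with rfl | rfl
        · exact d4 ⟨rfl, rfl⟩
        · exact d1 ⟨rfl, rfl⟩
      · rintro rfl
        rcases D.paparent u hn with rfl | rfl
        · exact d1 ⟨rfl, rfl⟩
        · exact d3 ⟨rfl, rfl⟩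
      · rintro rfl; exact d5 ⟨D.pbparent u hn, rfl⟩
  · -- no loops
    rintro ⟨u, v⟩ hm
    rw [D.memM u v] at hm
    rcases hm with ⟨rfl, rfl⟩ | ⟨rfl, rfl⟩ | ⟨hn, -⟩
    · exact D.qanea
    · exact D.qbneb
    · exact D.hnl _ hn
  · -- acyclic
    refine acyclic_of_sub (fun u v h => ?_) D.hacy
    rw [DNet.Arc, D.memM u v] at h
    rcases h with ⟨hu, hv⟩ | ⟨hu, hv⟩ | ⟨hn, -⟩
    · rw [hu, hv]
      exact Relation.TransGen.head D.hqapa (Relation.TransGen.single D.hpaa)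
    · rw [hu, hv]
      exact Relation.TransGen.head D.hqbpb (Relation.TransGen.single D.hpbb)
    · exact Relation.TransGen.single hn
  · -- unique root
    refine ⟨ρ, ⟨(D.memMverts ρ).2 ⟨hρv, hρnepa, hρnepb⟩, by rw [D.indeg_eq ρ hρnepa hρnepb]; exact hρ0⟩, ?_⟩
    rintro v ⟨hv, hv0⟩
    rw [D.memMverts v] at hv
    rw [D.indeg_eq v hv.2.1 hv.2.2] at hv0
    exact huniq v ⟨hv.1, hv0⟩
  · -- classification
    intro v hv
    rw [D.memMverts v] at hv
    obtain ⟨hvN, hv1, hv2⟩ := hv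
    have hin := D.indeg_eq v hv1 hv2
    have hout := D.outdeg_eq v hv1 hv2
    have hvM : v ∈ M.verts := (D.memMverts v).2 ⟨hvN, hv1, hv2⟩
    rcases D.hcl v hvN with h | h | h | h
    · exact Or.inl ⟨hvM, by rw [hin]; exact h.2.1, by rw [hout]; exact h.2.2⟩
    · exact Or.inr (Or.inl ⟨hvM, by rw [hin]; exact h.2.1, by rw [hout]; exact h.2.2⟩)
    · exact Or.inr (Or.inr (Or.inl ⟨hvM, by rw [hin]; exact h.2.1, by rw [hout]; exact h.2.2⟩))
    · exact Or.inr (Or.inr (Or.inr ⟨hvM, by rw [hin]; exact h.2.1, by rw [hout]; exact h.2.2⟩))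
  · -- tree-child
    intro v hv hvd
    rw [D.memMverts v] at hv
    obtain ⟨hvN, hv1, hv2⟩ := hv
    have hvd' : N.outDeg v ≠ 0 := by rwa [D.outdeg_eq v hv1 hv2] at hvd
    obtain ⟨c, hc, hTOL⟩ := D.htc v hvN hvd'
    have hc1 : N.inDeg c = 1 := TOL.inDeg_one hTOL
    have hcnepa : c ≠ pa := by
      intro h; rw [h, D.hretpa.2.1] at hc1; omega
    by_cases hcpb : c = pb
    · subst hcpb
      have hvqb : v = qb := D.pbparent v hc
      subst hvqb
      refine ⟨b, (D.memM v b).2 (Or.inr (Or.inl ⟨rfl, rfl⟩)), Or.inr ?_⟩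
      refine ⟨(D.memMverts b).2 ⟨D.bverts, D.bnepa, D.bnepb⟩, ?_, ?_⟩
      · rw [D.indeg_eq b D.bnepa D.bnepb]; exact D.hlb.2.1
      · rw [D.outdeg_eq b D.bnepa D.bnepb]; exact D.hlb.2.2
    · have hcM : (v, c) ∈ M.arcs := by
        rw [D.memM v c]
        refine Or.inr (Or.inr ⟨hc, ?_, ?_, ?_, ?_, ?_⟩)
        · rintro ⟨rfl, -⟩; exact hv2 rfl
        · rintro ⟨rfl, -⟩; exact hv1 rfl
        · rintro ⟨-, h⟩; exact hcnepa h
        · rintro ⟨rfl, -⟩; exact hv2 rfl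
        · rintro ⟨-, h⟩; exact hcpb h
      have hcv : c ∈ M.verts := (D.memMverts c).2 ⟨(D.hend _ hc).2, hcnepa, hcpb⟩
      have hcin := D.indeg_eq c hcnepa hcpb
      have hcout := D.outdeg_eq c hcnepa hcpb
      rcases hTOL with h | h
      · exact ⟨c, hcM, Or.inl ⟨hcv, by rw [hcin]; exact h.2.1, by rw [hcout]; exact h.2.2⟩⟩
      · exact ⟨c, hcM, Or.inr ⟨hcv, by rw [hcin]; exact h.2.1, by rw [hcout]; exact h.2.2⟩⟩

lemma ret_estab : Inv M a qa := by
  refine ⟨(D.memM qa a).2 (Or.inl ⟨rfl, rfl⟩), ?_, ?_, ?_, ?_⟩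
  · rw [D.outdeg_eq a D.anepa D.anepb]; exact D.hla.2.2
  · rw [D.indeg_eq a D.anepa D.anepb]; exact D.hla.2.1
  · rw [D.indeg_eq qa D.qanepa D.hqanepb]; exact D.qatype.2
  · intro c hc hca
    rw [D.memM qa c] at hc
    rcases hc with ⟨-, hce⟩ | ⟨hq, hce⟩ | ⟨hn, d1, d2, d3, d4, d5⟩
    · exact absurd hce hca
    · rw [hce, D.indeg_eq b D.bnepa D.bnepb, D.hlb.2.1]; omega
    · obtain ⟨c0, hc0, hTOL0⟩ := D.htc qa D.qaverts (by rw [D.qatype.1]; omega)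
      have hc01 : N.inDeg c0 = 1 := TOL.inDeg_one hTOL0
      have hc0nepa : c0 ≠ pa := by
        intro h; rw [h, D.hretpa.2.1] at hc01; omega
      rcases children_pair D.qatype.1 D.hqapa hc0 (Ne.symm hc0nepa) hn with rfl | rfl
      · exact absurd ⟨rfl, rfl⟩ d3
      · have hcpb : c ≠ pb := by
          intro h
          exact d5 ⟨(D.pbparent qa (h ▸ hn)).symm ▸ rfl, h⟩
        rw [D.indeg_eq c hc0nepa hcpb, hc01]; omega

lemma ret_maint (x q : ℕ) (hxa : x ≠ a) (hxb : x ≠ b) (hInv : Inv N x q) :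
    Inv M x q := by
  obtain ⟨hqx, hx0, hx1, hq2, h5⟩ := hInv
  have hxpa : x ≠ pa := by
    intro h; rw [h] at hx0; rw [D.hretpa.2.2] at hx0; omega
  have hxpb : x ≠ pb := by
    intro h; rw [h] at hx0; exact outDeg_ne_zero D.hpbb hx0
  have hqpa : q ≠ pa := by
    rintro rfl; exact hxa (D.pachild x hqx)
  have hqpb : q ≠ pb := by
    rintro rfl
    rcases D.pbchild x hqx with h | h
    · exact hxb h
    · exact hxpa h
  refine ⟨?_, ?_, ?_, ?_, ?_⟩
  · rw [D.memM q x]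
    refine Or.inr (Or.inr ⟨hqx, ?_, ?_, ?_, ?_, ?_⟩)
    · rintro ⟨-, h⟩; exact hxpa h
    · rintro ⟨h, -⟩; exact hqpa h
    · rintro ⟨-, h⟩; exact hxpa h
    · rintro ⟨-, h⟩; exact hxb h
    · rintro ⟨-, h⟩; exact hxpb h
  · rw [D.outdeg_eq x hxpa hxpb]; exact hx0
  · rw [D.indeg_eq x hxpa hxpb]; exact hx1
  · rw [D.indeg_eq q hqpa hqpb]; exact hq2
  · intro c hc hcx
    rw [D.memM q c] at hc
    rcases hc with ⟨-, hce⟩ | ⟨-, hce⟩ | ⟨hn, d1, d2, d3, d4, d5⟩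
    · rw [hce, D.indeg_eq a D.anepa D.anepb, D.hla.2.1]; omega
    · rw [hce, D.indeg_eq b D.bnepa D.bnepb, D.hlb.2.1]; omega
    · have hcpa : c ≠ pa := by
        rintro rfl
        rcases D.paparent q hn with rfl | rfl
        · exact d1 ⟨rfl, rfl⟩
        · exact d3 ⟨rfl, rfl⟩
      have hcpb : c ≠ pb := by
        rintro rfl
        exact d5 ⟨D.pbparent q hn, rfl⟩
      rw [D.indeg_eq c hcpa hcpb]
      exact h5 c hn hcx

end RetData
end CPS
namespace CPS

lemma exists_parent {N : DNet} {v : ℕ} (h : N.inDeg v ≠ 0) : ∃ w, (w, v) ∈ N.arcs := by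
  obtain ⟨⟨u, w⟩, hm⟩ := Finset.card_ne_zero.1 h
  obtain ⟨hm, he⟩ := Finset.mem_filter.1 hm
  exact ⟨u, by rwa [show w = v from he] at hm⟩

/-- Data of a non-root cherry reduction. -/
structure CherryNR (N M : DNet) (a b p g : ℕ) : Prop where
  hend : ∀ p ∈ N.arcs, p.1 ∈ N.verts ∧ p.2 ∈ N.verts
  hnl : ∀ p ∈ N.arcs, p.1 ≠ p.2
  hacy : N.Acyclic
  hrt : ∃! ρ, ρ ∈ N.verts ∧ N.inDeg ρ = 0
  hcl : ∀ v ∈ N.verts, N.IsRoot v ∨ N.IsLeaf v ∨ N.IsTreeVertex v ∨ N.IsRet v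
  htc : N.TreeChild
  hab : a ≠ b
  hla : N.IsLeaf a
  hlb : N.IsLeaf b
  hpa : (p, a) ∈ N.arcs
  hpb : (p, b) ∈ N.arcs
  hgp : (g, p) ∈ N.arcs
  hMv : M.verts = N.verts \ {a, p}
  hMa : M.arcs = insert (g, b) (N.arcs \ {(g, p), (p, a), (p, b)})

namespace CherryNR

variable {N M : DNet} {a b p g : ℕ} (D : CherryNR N M a b p g)
include D

lemma anep : a ≠ p := by
  intro h; have h1 := D.hla.2.2; rw [h] at h1; exact outDeg_ne_zero D.hpa h1

lemma bnep : b ≠ p := by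
  intro h; have h1 := D.hlb.2.2; rw [h] at h1; exact outDeg_ne_zero D.hpa h1

lemma gnep : g ≠ p := D.hnl _ D.hgp

lemma gnea : g ≠ a := by
  intro h; have h1 := D.hla.2.2; rw [← h] at h1; exact outDeg_ne_zero D.hgp h1

lemma gneb : g ≠ b := by
  intro h; have h1 := D.hlb.2.2; rw [← h] at h1; exact outDeg_ne_zero D.hgp h1

lemma pverts : p ∈ N.verts := (D.hend _ D.hpa).1
lemma gverts : g ∈ N.verts := (D.hend _ D.hgp).1
lemma averts : a ∈ N.verts := (D.hend _ D.hpa).2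
lemma bverts : b ∈ N.verts := (D.hend _ D.hpb).2

lemma ptree : N.inDeg p = 1 ∧ N.outDeg p = 2 := by
  rcases D.hcl p D.pverts with h | h | h | h
  · exact absurd h.2.1 (inDeg_ne_zero D.hgp)
  · exact absurd h.2.2 (outDeg_ne_zero D.hpa)
  · exact ⟨h.2.1, h.2.2⟩
  · exact absurd (child_unique h.2.2 D.hpa D.hpb) D.hab

lemma pchild : ∀ c, (p, c) ∈ N.arcs → c = a ∨ c = b :=
  fun _ hc => children_pair D.ptree.2 D.hpa D.hpb D.hab hc

lemma pparent : ∀ w, (w, p) ∈ N.arcs → w = g :=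
  fun _ hw => parent_unique D.ptree.1 hw D.hgp

lemma aparent : ∀ w, (w, a) ∈ N.arcs → w = p :=
  fun _ hw => parent_unique D.hla.2.1 hw D.hpa

lemma bparent : ∀ w, (w, b) ∈ N.arcs → w = p :=
  fun _ hw => parent_unique D.hlb.2.1 hw D.hpb

lemma gb_nmem : (g, b) ∉ N.arcs := fun h => D.gnep (D.bparent _ h)

lemma memM : ∀ u v : ℕ, ((u, v) ∈ M.arcs ↔ (u = g ∧ v = b) ∨
    ((u, v) ∈ N.arcs ∧ ¬(u = g ∧ v = p) ∧ ¬(u = p ∧ v = a) ∧ ¬(u = p ∧ v = b))) := by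
  intro u v
  rw [D.hMa]
  simp only [Finset.mem_insert, Finset.mem_sdiff, Finset.mem_singleton, Prod.mk.injEq,
    not_or]

lemma memMverts (v : ℕ) : v ∈ M.verts ↔ v ∈ N.verts ∧ v ≠ a ∧ v ≠ p := by
  rw [D.hMv]; simp [not_or]

lemma indeg_eq (v : ℕ) (h1 : v ≠ a) (h2 : v ≠ p) : M.inDeg v = N.inDeg v := by
  unfold DNet.inDeg
  by_cases hvb : v = b
  · subst hvb
    refine one_swap_card (d := (p, v)) (i := (g, v))
      (Finset.mem_filter.2 ⟨D.hpb, rfl⟩)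
      (fun h => D.gb_nmem (Finset.mem_filter.1 h).1) ?_
    rintro ⟨u, w⟩
    simp only [Finset.mem_filter, Prod.mk.injEq, ne_eq]
    rw [D.memM u w]
    constructor
    · rintro ⟨hm, rfl⟩
      rcases hm with ⟨rfl, -⟩ | ⟨hn, d1, d2, d3⟩
      · exact Or.inl ⟨rfl, rfl⟩
      · exact Or.inr ⟨⟨hn, rfl⟩, fun hx => d3 ⟨hx.1, hx.2⟩⟩
    · rintro (⟨rfl, rfl⟩ | ⟨⟨hn, rfl⟩, hne⟩)
      · exact ⟨Or.inl ⟨rfl, rfl⟩, rfl⟩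
      · refine ⟨Or.inr ⟨hn, ?_, ?_, ?_⟩, rfl⟩
        · rintro ⟨-, h⟩; exact D.bnep h
        · rintro ⟨-, h⟩; exact D.hab h.symm
        · rintro ⟨rfl, -⟩; exact hne ⟨rfl, rfl⟩
  · refine no_swap_card ?_
    rintro ⟨u, w⟩
    simp only [Finset.mem_filter, Prod.mk.injEq]
    rw [D.memM u w]
    constructor
    · rintro ⟨hm, rfl⟩
      rcases hm with ⟨-, h⟩ | ⟨hn, -⟩
      · exact absurd h hvb
      · exact ⟨hn, rfl⟩
    · rintro ⟨hn, rfl⟩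
      refine ⟨Or.inr ⟨hn, ?_, ?_, ?_⟩, rfl⟩
      · rintro ⟨-, h⟩; exact h2 h
      · rintro ⟨-, h⟩; exact h1 h
      · rintro ⟨-, h⟩; exact hvb h

lemma outdeg_eq (v : ℕ) (h2 : v ≠ p) : M.outDeg v = N.outDeg v := by
  unfold DNet.outDeg
  by_cases hvg : v = g
  · subst hvg
    refine one_swap_card (d := (v, p)) (i := (v, b))
      (Finset.mem_filter.2 ⟨D.hgp, rfl⟩)
      (fun h => D.gb_nmem (Finset.mem_filter.1 h).1) ?_
    rintro ⟨u, w⟩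
    simp only [Finset.mem_filter, Prod.mk.injEq, ne_eq]
    rw [D.memM u w]
    constructor
    · rintro ⟨hm, rfl⟩
      rcases hm with ⟨-, rfl⟩ | ⟨hn, d1, d2, d3⟩
      · exact Or.inl ⟨rfl, rfl⟩
      · refine Or.inr ⟨⟨hn, rfl⟩, ?_⟩
        rintro ⟨-, rfl⟩; exact d1 ⟨rfl, rfl⟩
    · rintro (⟨rfl, rfl⟩ | ⟨⟨hn, rfl⟩, hne⟩)
      · exact ⟨Or.inl ⟨rfl, rfl⟩, rfl⟩
      · refine ⟨Or.inr ⟨hn, ?_, ?_, ?_⟩, rfl⟩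
        · rintro ⟨-, h⟩; exact hne ⟨rfl, h⟩
        · rintro ⟨h, -⟩; exact D.gnep h
        · rintro ⟨h, -⟩; exact D.gnep h
  · refine no_swap_card ?_
    rintro ⟨u, w⟩
    simp only [Finset.mem_filter, Prod.mk.injEq]
    rw [D.memM u w]
    constructor
    · rintro ⟨hm, rfl⟩
      rcases hm with ⟨h, -⟩ | ⟨hn, -⟩
      · exact absurd h hvg
      · exact ⟨hn, rfl⟩
    · rintro ⟨hn, rfl⟩
      refine ⟨Or.inr ⟨hn, ?_, ?_, ?_⟩, rfl⟩
      · rintro ⟨h, -⟩; exact hvg h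
      · rintro ⟨h, -⟩; exact h2 h
      · rintro ⟨h, -⟩; exact h2 h

lemma cherry_good : Good M := by
  obtain ⟨ρ, ⟨hρv, hρ0⟩, huniq⟩ := D.hrt
  have hρnea : ρ ≠ a := by
    intro h; rw [h, D.hla.2.1] at hρ0; omega
  have hρnep : ρ ≠ p := by
    intro h; rw [h, D.ptree.1] at hρ0; omega
  refine ⟨?_, ?_, ?_, ?_, ?_, ?_⟩
  · rintro ⟨u, v⟩ hm
    rw [D.memM u v] at hm
    simp only [D.memMverts]
    rcases hm with ⟨hu, hv⟩ | ⟨hn, d1, d2, d3⟩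
    · rw [hu, hv]
      exact ⟨⟨D.gverts, D.gnea, D.gnep⟩, D.bverts, Ne.symm D.hab, D.bnep⟩
    · refine ⟨⟨(D.hend _ hn).1, ?_, ?_⟩, (D.hend _ hn).2, ?_, ?_⟩
      · rintro rfl
        have h1 := D.hla.2.2
        exact outDeg_ne_zero hn h1
      · rintro rfl
        rcases D.pchild v hn with rfl | rfl
        · exact d2 ⟨rfl, rfl⟩
        · exact d3 ⟨rfl, rfl⟩
      · rintro rfl; exact d2 ⟨D.aparent u hn, rfl⟩
      · rintro rfl; exact d1 ⟨D.pparent u hn, rfl⟩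
  · rintro ⟨u, v⟩ hm
    rw [D.memM u v] at hm
    rcases hm with ⟨hu, hv⟩ | ⟨hn, -⟩
    · rw [hu, hv]; exact D.gneb
    · exact D.hnl _ hn
  · refine acyclic_of_sub (fun u v h => ?_) D.hacy
    rw [DNet.Arc, D.memM u v] at h
    rcases h with ⟨hu, hv⟩ | ⟨hn, -⟩
    · rw [hu, hv]
      exact Relation.TransGen.head D.hgp (Relation.TransGen.single D.hpb)
    · exact Relation.TransGen.single hn
  · refine ⟨ρ, ⟨(D.memMverts ρ).2 ⟨hρv, hρnea, hρnep⟩,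
      by rw [D.indeg_eq ρ hρnea hρnep]; exact hρ0⟩, ?_⟩
    rintro v ⟨hv, hv0⟩
    rw [D.memMverts v] at hv
    rw [D.indeg_eq v hv.2.1 hv.2.2] at hv0
    exact huniq v ⟨hv.1, hv0⟩
  · intro v hv
    rw [D.memMverts v] at hv
    obtain ⟨hvN, hv1, hv2⟩ := hv
    have hin := D.indeg_eq v hv1 hv2
    have hout := D.outdeg_eq v hv2
    have hvM : v ∈ M.verts := (D.memMverts v).2 ⟨hvN, hv1, hv2⟩
    rcases D.hcl v hvN with h | h | h | h
    · exact Or.inl ⟨hvM, by rw [hin]; exact h.2.1, by rw [hout]; exact h.2.2⟩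
    · exact Or.inr (Or.inl ⟨hvM, by rw [hin]; exact h.2.1, by rw [hout]; exact h.2.2⟩)
    · exact Or.inr (Or.inr (Or.inl ⟨hvM, by rw [hin]; exact h.2.1, by rw [hout]; exact h.2.2⟩))
    · exact Or.inr (Or.inr (Or.inr ⟨hvM, by rw [hin]; exact h.2.1, by rw [hout]; exact h.2.2⟩))
  · intro v hv hvd
    rw [D.memMverts v] at hv
    obtain ⟨hvN, hv1, hv2⟩ := hv
    have hvd' : N.outDeg v ≠ 0 := by rwa [D.outdeg_eq v hv2] at hvd
    obtain ⟨c, hc, hTOL⟩ := D.htc v hvN hvd'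
    have hcnea : c ≠ a := by
      rintro rfl; exact hv2 (D.aparent v hc)
    by_cases hcp : c = p
    · subst hcp
      have hvg : v = g := D.pparent v hc
      subst hvg
      refine ⟨b, (D.memM v b).2 (Or.inl ⟨rfl, rfl⟩), Or.inr ?_⟩
      refine ⟨(D.memMverts b).2 ⟨D.bverts, Ne.symm D.hab, D.bnep⟩, ?_, ?_⟩
      · rw [D.indeg_eq b (Ne.symm D.hab) D.bnep]; exact D.hlb.2.1
      · rw [D.outdeg_eq b D.bnep]; exact D.hlb.2.2
    · have hcM : (v, c) ∈ M.arcs := by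
        rw [D.memM v c]
        refine Or.inr ⟨hc, ?_, ?_, ?_⟩
        · rintro ⟨-, h⟩; exact hcp h
        · rintro ⟨h, -⟩; exact hv2 h
        · rintro ⟨h, -⟩; exact hv2 h
      have hcv : c ∈ M.verts := (D.memMverts c).2 ⟨(D.hend _ hc).2, hcnea, hcp⟩
      have hcin := D.indeg_eq c hcnea hcp
      have hcout := D.outdeg_eq c hcp
      rcases hTOL with h | h
      · exact ⟨c, hcM, Or.inl ⟨hcv, by rw [hcin]; exact h.2.1, by rw [hcout]; exact h.2.2⟩⟩
      · exact ⟨c, hcM, Or.inr ⟨hcv, by rw [hcin]; exact h.2.1, by rw [hcout]; exact h.2.2⟩⟩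

lemma cherry_maint (x q : ℕ) (hxa : x ≠ a) (hxb : x ≠ b) (hInv : Inv N x q) :
    Inv M x q := by
  obtain ⟨hqx, hx0, hx1, hq2, h5⟩ := hInv
  have hxp : x ≠ p := by
    intro h; rw [h] at hx0; exact outDeg_ne_zero D.hpa hx0
  have hqp : q ≠ p := by
    rintro rfl
    rcases D.pchild x hqx with h | h
    · exact hxa h
    · exact hxb h
  have hqa : q ≠ a := by
    intro h; rw [h] at hqx; have h1 := D.hla.2.2; exact outDeg_ne_zero hqx h1
  refine ⟨?_, ?_, ?_, ?_, ?_⟩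
  · rw [D.memM q x]
    refine Or.inr ⟨hqx, ?_, ?_, ?_⟩
    · rintro ⟨-, h⟩; exact hxp h
    · rintro ⟨h, -⟩; exact hqp h
    · rintro ⟨h, -⟩; exact hqp h
  · rw [D.outdeg_eq x hxp]; exact hx0
  · rw [D.indeg_eq x hxa hxp]; exact hx1
  · rw [D.indeg_eq q hqa hqp]; exact hq2
  · intro c hc hcx
    rw [D.memM q c] at hc
    rcases hc with ⟨-, hce⟩ | ⟨hn, d1, d2, d3⟩
    · rw [hce, D.indeg_eq b (Ne.symm D.hab) D.bnep, D.hlb.2.1]; omega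
    · have hca : c ≠ a := by
        rintro rfl; exact hqp (D.aparent q hn)
      have hcp : c ≠ p := by
        rintro rfl; exact d1 ⟨D.pparent q hn, rfl⟩
      rw [D.indeg_eq c hca hcp]
      exact h5 c hn hcx

end CherryNR

/-- Data of a root cherry reduction. -/
structure CherryRT (N M : DNet) (a b p : ℕ) : Prop where
  hend : ∀ p ∈ N.arcs, p.1 ∈ N.verts ∧ p.2 ∈ N.verts
  hnl : ∀ p ∈ N.arcs, p.1 ≠ p.2
  hacy : N.Acyclic
  hrt : ∃! ρ, ρ ∈ N.verts ∧ N.inDeg ρ = 0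
  hcl : ∀ v ∈ N.verts, N.IsRoot v ∨ N.IsLeaf v ∨ N.IsTreeVertex v ∨ N.IsRet v
  htc : N.TreeChild
  hab : a ≠ b
  hla : N.IsLeaf a
  hlb : N.IsLeaf b
  hpa : (p, a) ∈ N.arcs
  hpb : (p, b) ∈ N.arcs
  hp0 : N.inDeg p = 0
  hMv : M.verts = N.verts \ {a, p}
  hMa : M.arcs = N.arcs \ {(p, a), (p, b)}

namespace CherryRT

variable {N M : DNet} {a b p : ℕ} (D : CherryRT N M a b p)
include D

lemma pverts : p ∈ N.verts := (D.hend _ D.hpa).1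

lemma proot : N.outDeg p = 2 := by
  rcases D.hcl p D.pverts with h | h | h | h
  · exact h.2.2
  · exact absurd h.2.2 (outDeg_ne_zero D.hpa)
  · have := h.2.1; rw [D.hp0] at this; omega
  · have := h.2.1; rw [D.hp0] at this; omega

lemma pchild : ∀ c, (p, c) ∈ N.arcs → c = a ∨ c = b :=
  fun _ hc => children_pair D.proot D.hpa D.hpb D.hab hc

lemma arcs_eq : N.arcs = {(p, a), (p, b)} := by
  obtain ⟨ρ, -, huniq⟩ := D.hrt
  have hρp : ∀ z, z ∈ N.verts → N.inDeg z = 0 → z = p := by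
    intro z hz h0
    rw [huniq z ⟨hz, h0⟩, huniq p ⟨D.pverts, D.hp0⟩]
  have hnop : ∀ z, ¬ (z ≠ p ∧ ∃ w, (z, w) ∈ N.arcs) := by
    refine no_infinite_ancestor N D.hacy _ (fun z hz => (D.hend _ hz.2.choose_spec).1) ?_
    rintro z ⟨hzp, w, hzw⟩
    have hzv : z ∈ N.verts := (D.hend _ hzw).1
    have hz0 : N.inDeg z ≠ 0 := by
      intro h0; exact hzp (hρp z hzv h0)
    obtain ⟨w', hw'⟩ := exists_parent hz0
    have hw'p : w' ≠ p := by
      rintro rfl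
      rcases D.pchild z hw' with rfl | rfl
      · exact outDeg_ne_zero hzw D.hla.2.2
      · exact outDeg_ne_zero hzw D.hlb.2.2
    exact ⟨w', ⟨hw'p, z, hw'⟩, hw'⟩
  ext ⟨u, v⟩
  simp only [Finset.mem_insert, Finset.mem_singleton, Prod.mk.injEq]
  constructor
  · intro hm
    have hup : u = p := by
      by_contra hup
      exact hnop u ⟨hup, v, hm⟩
    subst hup
    rcases D.pchild v hm with rfl | rfl
    · exact Or.inl ⟨rfl, rfl⟩
    · exact Or.inr ⟨rfl, rfl⟩
  · rintro (⟨rfl, rfl⟩ | ⟨rfl, rfl⟩)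
    · exact D.hpa
    · exact D.hpb

lemma arcsM_empty : M.arcs = ∅ := by
  rw [D.hMa, D.arcs_eq]
  ext ⟨u, v⟩
  simp

lemma cherry_maint (x q : ℕ) (hxa : x ≠ a) (hxb : x ≠ b) (hInv : Inv N x q) :
    Inv M x q := by
  exfalso
  have := hInv.1
  rw [D.arcs_eq] at this
  simp only [Finset.mem_insert, Finset.mem_singleton, Prod.mk.injEq] at this
  rcases this with ⟨-, h⟩ | ⟨-, h⟩
  · exact hxa h
  · exact hxb h

end CherryRT
end CPS
namespace CPS

lemma step_arcs_ne {N M : DNet} {r : Pick} (hs : RStep N M r) : N.arcs ≠ ∅ := by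
  cases r with
  | cherry x y =>
    obtain ⟨-, p, hpa, -⟩ := hs
    exact Finset.ne_empty_of_mem hpa
  | ret x y =>
    obtain ⟨-, pa, pb, qa, qb, hpaa, -⟩ := hs
    exact Finset.ne_empty_of_mem hpaa

lemma good_of_step {N M : DNet} {r : Pick} (hG : Good N) (hs : RStep N M r) :
    Good M ∨ M.arcs = ∅ := by
  obtain ⟨hend, hnl, hacy, hrt, hcl, htc⟩ := hG
  cases r with
  | cherry x y =>
    obtain ⟨⟨hxy, hlx, hly, -⟩, p, hpa, hpb, hcase⟩ := hs
    rcases hcase with ⟨hp0, hMv, hMa⟩ | ⟨g, hgp, hMv, hMa⟩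
    · exact Or.inr
        (CherryRT.mk hend hnl hacy hrt hcl htc hxy hlx hly hpa hpb hp0 hMv hMa).arcsM_empty
    · exact Or.inl
        (CherryNR.mk hend hnl hacy hrt hcl htc hxy hlx hly hpa hpb hgp hMv hMa).cherry_good
  | ret x y =>
    obtain ⟨⟨hxy, hlx, hly, -⟩, pa, pb, qa, qb, hpaa, hpbb, hret, hpbpa, hqapa,
      hqanepb, hqbpb, hMv, hMa⟩ := hs
    exact Or.inl (RetData.mk hend hnl hacy hrt hcl htc hxy hlx hly hpaa hpbb hret
      hpbpa hqapa hqanepb hqbpb hMv hMa).ret_good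

lemma maint_of_step {N M : DNet} {r : Pick} {x q : ℕ} (hG : Good N) (hs : RStep N M r)
    (hc : ¬ r.Contains x) (hInv : Inv N x q) : Inv M x q := by
  obtain ⟨hend, hnl, hacy, hrt, hcl, htc⟩ := hG
  cases r with
  | cherry u w =>
    have hxu : x ≠ u := fun h => hc (Or.inl h.symm)
    have hxw : x ≠ w := fun h => hc (Or.inr h.symm)
    obtain ⟨⟨hxy, hlx, hly, -⟩, p, hpa, hpb, hcase⟩ := hs
    rcases hcase with ⟨hp0, hMv, hMa⟩ | ⟨g, hgp, hMv, hMa⟩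
    · exact (CherryRT.mk hend hnl hacy hrt hcl htc hxy hlx hly hpa hpb hp0 hMv
        hMa).cherry_maint x q hxu hxw hInv
    · exact (CherryNR.mk hend hnl hacy hrt hcl htc hxy hlx hly hpa hpb hgp hMv
        hMa).cherry_maint x q hxu hxw hInv
  | ret u w =>
    have hxu : x ≠ u := fun h => hc (Or.inl h.symm)
    have hxw : x ≠ w := fun h => hc (Or.inr h.symm)
    obtain ⟨⟨hxy, hlx, hly, -⟩, pa, pb, qa, qb, hpaa, hpbb, hret, hpbpa, hqapa,
      hqanepb, hqbpb, hMv, hMa⟩ := hs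
    exact (RetData.mk hend hnl hacy hrt hcl htc hxy hlx hly hpaa hpbb hret
      hpbpa hqapa hqanepb hqbpb hMv hMa).ret_maint x q hxu hxw hInv

lemma estab_of_step {N M : DNet} {x y : ℕ} (hG : Good N)
    (hs : RReduceRetCherry N M x y) :
    ∃ q, Inv M x q ∧ ∃ pa', (q, pa') ∈ N.arcs ∧ N.IsRet pa' := by
  obtain ⟨hend, hnl, hacy, hrt, hcl, htc⟩ := hG
  obtain ⟨⟨hxy, hlx, hly, -⟩, pa, pb, qa, qb, hpaa, hpbb, hret, hpbpa, hqapa,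
    hqanepb, hqbpb, hMv, hMa⟩ := hs
  exact ⟨qa, (RetData.mk hend hnl hacy hrt hcl htc hxy hlx hly hpaa hpbb hret
    hpbpa hqapa hqanepb hqbpb hMv hMa).ret_estab, pa, hqapa, hret⟩

end CPS
/-- Lemma 2: If the rooted binary phylogenetic network `Ns 0` is tree-child,
then every cherry-picking sequence associated with a complete cherry-reduction sequence
for it is tree-child. -/
theorem treeChild_sequence_of_treeChild (X : Finset ℕ) (Ns : ℕ → DNet) (rs : ℕ → Pick)
    (k : ℕ) (hR : IsRootedBinaryNet (Ns 0) X) (htc : (Ns 0).TreeChild)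
    (hseq : RCherrySeq Ns rs k) (hcomp : (Ns k).SingleVertex) :
    TreeChildSeq rs k := by
  have hgood : ∀ n, n < k → CPS.Good (Ns n) := by
    intro n
    induction n with
    | zero =>
      intro h0
      rcases hR with ⟨x, -, -, harcs⟩ | ⟨h1, h2, h3, h4, h5, -⟩
      · exact absurd harcs (CPS.step_arcs_ne (hseq 0 h0))
      · exact ⟨h1, h2, h3, h4, h5, htc⟩
    | succ n ih =>
      intro hn1
      have hn : n < k := by omega
      rcases CPS.good_of_step (ih hn) (hseq n hn) with h | h
      · exact h
      · exact absurd h (CPS.step_arcs_ne (hseq (n + 1) hn1))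
  have roll : ∀ x q i m, i + 1 ≤ m → m ≤ k → CPS.Inv (Ns (i + 1)) x q →
      (∀ l, i < l → l < m → ¬ (rs l).Contains x) → CPS.Inv (Ns m) x q := by
    intro x q i m
    induction m with
    | zero => omega
    | succ m ih =>
      intro him hmk hInv hfree
      rcases Nat.lt_or_ge (i + 1) (m + 1) with h | h
      · have hInvm := ih (by omega) (by omega) hInv
          (fun l h1 h2 => hfree l h1 (by omega))
        exact CPS.maint_of_step (hgood m (by omega)) (hseq m (by omega))
          (hfree m (by omega) (by omega)) hInvm
      · have he : i + 1 = m + 1 := by omega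
        rw [← he]; exact hInv
  have setup : ∀ i j x y, i < j → j < k → rs i = Pick.ret x y →
      (∀ l, i < l → l < j → ¬ (rs l).Contains x) →
      ∃ q, CPS.Inv (Ns j) x q ∧
        (∀ m, i < m → m ≤ j → CPS.Inv (Ns m) x q) ∧
        ∃ pa', (q, pa') ∈ (Ns i).arcs ∧ (Ns i).IsRet pa' := by
    intro i j x y hij hjk hri hfree
    have hik : i < k := by omega
    have hstep : RReduceRetCherry (Ns i) (Ns (i + 1)) x y := by
      have := hseq i hik; rw [hri] at this; exact this
    obtain ⟨q, hInv, hpa⟩ := CPS.estab_of_step (hgood i hik) hstep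
    refine ⟨q, ?_, ?_, hpa⟩
    · exact roll x q i j (by omega) (by omega) hInv hfree
    · intro m hm1 hm2
      exact roll x q i m (by omega) (by omega) hInv
        (fun l h1 h2 => hfree l h1 (by omega))
  have P1 : SeqP1 rs k := by
    intro i j hret hsucc
    obtain ⟨hij, hjk, hcont, hmin⟩ := hsucc
    cases hri : rs i with
    | cherry u w => rw [hri] at hret; simp [Pick.IsRetPair] at hret
    | ret x y =>
      have hfst : (rs i).fst = x := by rw [hri]; rfl
      rw [hfst] at hcont hmin
      obtain ⟨q, hInvj, -, -⟩ := setup i j x y hij hjk hri hmin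
      obtain ⟨hqx, hx0, hx1, hq2, h5⟩ := hInvj
      cases hrj : rs j with
      | cherry _ _ => simp [Pick.IsCherryPair]
      | ret u w =>
        exfalso
        have hstepj : RReduceRetCherry (Ns j) (Ns (j + 1)) u w := by
          have := hseq j hjk; rw [hrj] at this; exact this
        obtain ⟨⟨huw, hlu, hlw, -⟩, pa2, pb2, qa2, qb2, hpaa2, hpbb2, hret2, hpbpa2,
          hqapa2, hqane2, hqbpb2, -, -⟩ := hstepj
        rw [hrj] at hcont
        simp only [Pick.Contains, Pick.fst, Pick.snd] at hcont
        rcases hcont with hux | hwx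
        · have hpx : (pa2, x) ∈ (Ns j).arcs := by rwa [hux] at hpaa2
          have hqe : q = pa2 := CPS.parent_unique hx1 hqx hpx
          rw [hqe] at hq2
          exact hq2 hret2.2.1
        · have hpx : (pb2, x) ∈ (Ns j).arcs := by rwa [hwx] at hpbb2
          have hqpb : q = pb2 := CPS.parent_unique hx1 hqx hpx
          have hpax : pa2 ≠ x := by
            intro h
            have e := hret2.2.1
            rw [h] at e
            omega
          exact (h5 pa2 (by rw [hqpb]; exact hpbpa2) hpax) hret2.2.1
  have P2' : ∀ i i' j, i < i' → (rs i).IsRetPair → (rs i').IsRetPair →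
      SuccAt rs k i j → SuccAt rs k i' j → False := by
    intro i i' j hii' hret hret' hs hs'
    obtain ⟨hij, hjk, hcont, hmin⟩ := hs
    obtain ⟨hi'j, -, hcont', hmin'⟩ := hs'
    cases hri : rs i with
    | cherry u w => rw [hri] at hret; simp [Pick.IsRetPair] at hret
    | ret x y =>
    cases hri' : rs i' with
    | cherry u w => rw [hri'] at hret'; simp [Pick.IsRetPair] at hret'
    | ret x' y' =>
    have hfst : (rs i).fst = x := by rw [hri]; rfl
    have hfst' : (rs i').fst = x' := by rw [hri']; rfl
    rw [hfst] at hcont hmin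
    rw [hfst'] at hcont' hmin'
    have hxx' : x ≠ x' := by
      rintro rfl
      exact hmin i' hii' hi'j (by rw [hri']; exact Or.inl rfl)
    obtain ⟨q, hInvj, hInvm, -⟩ := setup i j x y hij hjk hri hmin
    obtain ⟨q', hInvj', -, pa2, hqpa2, hret2⟩ := setup i' j x' y' hi'j hjk hri' hmin'
    have hcherry : (rs j).IsCherryPair := by
      refine P1 i j (by rw [hri]; simp [Pick.IsRetPair]) ⟨hij, hjk, ?_, ?_⟩
      · rw [hfst]; exact hcont
      · intro l h1 h2; rw [hfst]; exact hmin l h1 h2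
    cases hrj : rs j with
    | ret _ _ => rw [hrj] at hcherry; simp [Pick.IsCherryPair] at hcherry
    | cherry u w =>
      have hstepj : RReduceCherry (Ns j) (Ns (j + 1)) u w := by
        have := hseq j hjk; rw [hrj] at this; exact this
      obtain ⟨⟨huw, hlu, hlw, pr, hpru, hprw⟩, -⟩ := hstepj
      rw [hrj] at hcont hcont'
      simp only [Pick.Contains, Pick.fst, Pick.snd] at hcont hcont'
      obtain ⟨hqx, hx0, hx1, -, -⟩ := hInvj
      obtain ⟨hqx', hx0', hx1', -, -⟩ := hInvj'
      have hprx : (pr, x) ∈ (Ns j).arcs := by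
        rcases hcont with h | h
        · rwa [h] at hpru
        · rwa [h] at hprw
      have hprx' : (pr, x') ∈ (Ns j).arcs := by
        rcases hcont' with h | h
        · rwa [h] at hpru
        · rwa [h] at hprw
      have hq : q = pr := CPS.parent_unique hx1 hqx hprx
      have hq' : q' = pr := CPS.parent_unique hx1' hqx' hprx'
      have hInvi' : CPS.Inv (Ns i') x q := hInvm i' hii' (le_of_lt hi'j)
      obtain ⟨-, -, hx1i, -, h5i⟩ := hInvi'
      have hqpa2' : (q, pa2) ∈ (Ns i').arcs := by
        rw [hq, ← hq']; exact hqpa2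
      have hpa2x : pa2 ≠ x := by
        intro h
        have e := hret2.2.1
        rw [h] at e
        omega
      exact (h5i pa2 hqpa2' hpa2x) hret2.2.1
  refine ⟨P1, ?_⟩
  intro i i' j hne hret hret' hs hs'
  rcases Nat.lt_or_ge i i' with h | h
  · exact P2' i i' j h hret hret' hs hs'
  · exact P2' i' i j (lt_of_le_of_ne h (Ne.symm hne)) hret' hret hs' hs
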